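/- arXiv:1303.5239 — 4 statements merged into one kernel-verified Lean document; each statement's English description precedes it below -/
import Mathlib

section
/- Let $G$ be an inverse semigroup acting by (semigroup) endomorphisms on the left of an inverse semigroup $A$, with action denoted $g \cdot \alpha$. Then the set $\{(\alpha, g) \in A \times G \mid (gg^{-1}) \cdot \alpha = \alpha\}$ is closed under the multiplication $(\alpha, g)(\beta, h) = (((gh)(gh)^{-1} \cdot \alpha) \circ (g \cdot \beta),\ gh)$, and this multiplication is associative. -/
/-- A semigroup is inverse if every element has a unique inverse. -/
def IsInverseSemigroup (S : Type*) [Semigroup S] : Prop :=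
  ∀ x : S, ∃! y : S, x * y * x = x ∧ y * x * y = y

/-- Multiplication of the λ-semidirect product of `G` acting on `A`. -/
def lamMul {A G : Type*} [Mul A] [Mul G] (act : G → A → A) (invG : G → G)
    (p q : A × G) : A × G :=
  (act ((p.2 * q.2) * invG (p.2 * q.2)) p.1 * act p.2 q.1, p.2 * q.2)

/-- Underlying set of the λ-semidirect product of `G` acting on `A`. -/
def lamSet {A G : Type*} [Mul G] (act : G → A → A) (invG : G → G) : Set (A × G) :=
  {p | act (p.2 * invG p.2) p.1 = p.1}

/-! In an inverse semigroup idempotents commute, so the inverse is an anti-homomorphism and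
`(st)(st)⁻¹ s = s (tt⁻¹)`. Since `G` acts by endomorphisms, this identity turns
`(gh)(gh)⁻¹ · (g · β)` into `g · ((hh⁻¹) · β)`, which gives closure when `(hh⁻¹) · β = β`,
and, applied to `s = g`, `t = hk`, it makes the two ways of bracketing a triple product agree
componentwise. -/

namespace IsInverseSemigroup

variable {G : Type*} [Semigroup G]

theorem inverse_unique (hG : IsInverseSemigroup G) {x y z : G}
    (hy : x * y * x = x ∧ y * x * y = y) (hz : x * z * x = x ∧ z * x * z = z) : y = z :=
  (hG x).unique hy hz

theorem isIdempotentElem_mul (hG : IsInverseSemigroup G) {e f : G}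
    (he : IsIdempotentElem e) (hf : IsIdempotentElem f) : IsIdempotentElem (e * f) := by
  obtain ⟨x, ⟨hx₁, hx₂⟩, -⟩ := hG (e * f)
  -- `f x e` is another inverse of `e f`, hence equal to `x`; so `x` is idempotent and `e f = x`.
  have hfxe : f * x * e = x := by
    refine hG.inverse_unique ⟨?_, ?_⟩ ⟨hx₁, hx₂⟩
    · calc e * f * (f * x * e) * (e * f) = e * (f * f) * x * ((e * e) * f) := by
            simp only [mul_assoc]
        _ = e * f := by rw [he.eq, hf.eq, hx₁]
    · calc f * x * e * (e * f) * (f * x * e) = f * (x * (e * e) * (f * f) * x) * e := by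
            simp only [mul_assoc]
        _ = f * x * e := by rw [he.eq, hf.eq, mul_assoc x e f, hx₂]
  have hx : IsIdempotentElem x := by
    calc x * x = f * (x * (e * f) * x) * e := by
          conv_lhs => rw [← hfxe]
          simp only [mul_assoc]
      _ = x := by rw [hx₂, hfxe]
  have hef : e * f = x :=
    hG.inverse_unique (x := x) ⟨hx₂, hx₁⟩ ⟨by rw [hx.eq, hx.eq], by rw [hx.eq, hx.eq]⟩
  rw [hef]
  exact hx

theorem commute_of_isIdempotentElem (hG : IsInverseSemigroup G) {e f : G}
    (he : IsIdempotentElem e) (hf : IsIdempotentElem f) : Commute e f := by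
  have hef := hG.isIdempotentElem_mul he hf
  have hfe := hG.isIdempotentElem_mul hf he
  -- both `e f` and `f e` are inverses of `e f`
  refine (hG.inverse_unique (x := e * f) ⟨?_, ?_⟩
    ⟨by rw [hef.eq, hef.eq], by rw [hef.eq, hef.eq]⟩).symm
  · calc e * f * (f * e) * (e * f) = e * (f * f) * ((e * e) * f) := by simp only [mul_assoc]
      _ = e * f := by rw [he.eq, hf.eq, hef.eq]
  · calc f * e * (e * f) * (f * e) = f * (e * e) * ((f * f) * e) := by simp only [mul_assoc]
      _ = f * e := by rw [he.eq, hf.eq, hfe.eq]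

section Inverse

variable {inv : G → G}

theorem isIdempotentElem_mul_inv (hinv : ∀ g : G, g * inv g * g = g ∧ inv g * g * inv g = inv g)
    (g : G) : IsIdempotentElem (g * inv g) := by
  rw [IsIdempotentElem, ← mul_assoc, (hinv g).1]

theorem isIdempotentElem_inv_mul (hinv : ∀ g : G, g * inv g * g = g ∧ inv g * g * inv g = inv g)
    (g : G) : IsIdempotentElem (inv g * g) := by
  rw [IsIdempotentElem, ← mul_assoc, (hinv g).2]

theorem inv_mul_rev (hG : IsInverseSemigroup G)
    (hinv : ∀ g : G, g * inv g * g = g ∧ inv g * g * inv g = inv g) (s t : G) :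
    inv (s * t) = inv t * inv s := by
  have hc : t * inv t * (inv s * s) = inv s * s * (t * inv t) :=
    (hG.commute_of_isIdempotentElem (isIdempotentElem_mul_inv hinv t)
      (isIdempotentElem_inv_mul hinv s)).eq
  refine (hG.inverse_unique ⟨?_, ?_⟩ (hinv (s * t))).symm
  · calc s * t * (inv t * inv s) * (s * t) = s * (t * inv t * (inv s * s)) * t := by
          simp only [mul_assoc]
      _ = s * inv s * s * (t * inv t * t) := by rw [hc]; simp only [mul_assoc]
      _ = s * t := by rw [(hinv s).1, (hinv t).1]
  · calc inv t * inv s * (s * t) * (inv t * inv s)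
          = inv t * (t * inv t * (inv s * s)) * inv s := by rw [hc]; simp only [mul_assoc]
      _ = inv t * t * inv t * (inv s * s * inv s) := by simp only [mul_assoc]
      _ = inv t * inv s := by rw [(hinv s).2, (hinv t).2]

theorem mul_mul_inv_mul_left (hG : IsInverseSemigroup G)
    (hinv : ∀ g : G, g * inv g * g = g ∧ inv g * g * inv g = inv g) (s t : G) :
    s * t * inv (s * t) * s = s * (t * inv t) := by
  have hc : t * inv t * (inv s * s) = inv s * s * (t * inv t) :=
    (hG.commute_of_isIdempotentElem (isIdempotentElem_mul_inv hinv t)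
      (isIdempotentElem_inv_mul hinv s)).eq
  calc s * t * inv (s * t) * s = s * (t * inv t * (inv s * s)) := by
        rw [hG.inv_mul_rev hinv]; simp only [mul_assoc]
    _ = s * inv s * s * (t * inv t) := by rw [hc]; simp only [mul_assoc]
    _ = s * (t * inv t) := by rw [(hinv s).1]

theorem mul_mul_inv_mul_mul_inv_self (hG : IsInverseSemigroup G)
    (hinv : ∀ g : G, g * inv g * g = g ∧ inv g * g * inv g = inv g) (s t : G) :
    s * t * inv (s * t) * (s * inv s) = s * t * inv (s * t) := by
  rw [← mul_assoc, hG.mul_mul_inv_mul_left hinv, hG.inv_mul_rev hinv]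
  simp only [mul_assoc]

end Inverse

end IsInverseSemigroup

section LambdaSemidirect

open IsInverseSemigroup

variable {A G : Type*} [Semigroup A] [Semigroup G] {invG : G → G} {act : G → A → A}

theorem lamMul_mem_lamSet (hG : IsInverseSemigroup G)
    (hinvG : ∀ g : G, g * invG g * g = g ∧ invG g * g * invG g = invG g)
    (hact_mul : ∀ (g : G) (a b : A), act g (a * b) = act g a * act g b)
    (hact_comp : ∀ (g h : G) (a : A), act (g * h) a = act g (act h a))
    (p : A × G) {q : A × G} (hq : q ∈ lamSet act invG) :
    lamMul act invG p q ∈ lamSet act invG := by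
  obtain ⟨a, g⟩ := p
  obtain ⟨b, h⟩ := q
  simp only [lamSet, lamMul, Set.mem_ofPred_eq] at hq ⊢
  rw [hact_mul, ← hact_comp, ← hact_comp, (isIdempotentElem_mul_inv hinvG (g * h)).eq,
    hG.mul_mul_inv_mul_left hinvG, hact_comp g, hq]

theorem lamMul_assoc (hG : IsInverseSemigroup G)
    (hinvG : ∀ g : G, g * invG g * g = g ∧ invG g * g * invG g = invG g)
    (hact_mul : ∀ (g : G) (a b : A), act g (a * b) = act g a * act g b)
    (hact_comp : ∀ (g h : G) (a : A), act (g * h) a = act g (act h a))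
    (p q r : A × G) :
    lamMul act invG (lamMul act invG p q) r = lamMul act invG p (lamMul act invG q r) := by
  obtain ⟨a, g⟩ := p
  obtain ⟨b, h⟩ := q
  obtain ⟨c, k⟩ := r
  have hE : g * h * k * invG (g * h * k) * (g * h * invG (g * h)) = g * h * k * invG (g * h * k) :=
    hG.mul_mul_inv_mul_mul_inv_self hinvG (g * h) k
  have hEg : g * h * k * invG (g * h * k) * g = g * (h * k * invG (h * k)) := by
    rw [mul_assoc g h k]
    exact hG.mul_mul_inv_mul_left hinvG g (h * k)
  simp only [lamMul, Prod.mk.injEq, ← mul_assoc g h k, and_true]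
  rw [hact_mul, ← hact_comp _ (g * h * invG (g * h)), hE, ← hact_comp _ g, hEg,
    hact_mul g, hact_comp g, hact_comp g h, mul_assoc]

end LambdaSemidirect

theorem lamSemidirect_closed_and_assoc_general {A G : Type*} [Semigroup A] [Semigroup G]
    (hG : IsInverseSemigroup G)
    (invG : G → G)
    (hinvG : ∀ g : G, g * invG g * g = g ∧ invG g * g * invG g = invG g)
    (act : G → A → A)
    (hact_mul : ∀ (g : G) (a b : A), act g (a * b) = act g a * act g b)
    (hact_comp : ∀ (g h : G) (a : A), act (g * h) a = act g (act h a)) :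
    (∀ p ∈ lamSet act invG, ∀ q ∈ lamSet act invG,
        lamMul act invG p q ∈ lamSet act invG) ∧
    (∀ p ∈ lamSet act invG, ∀ q ∈ lamSet act invG, ∀ r ∈ lamSet act invG,
        lamMul act invG (lamMul act invG p q) r
          = lamMul act invG p (lamMul act invG q r)) :=
  ⟨fun p _ _ hq => lamMul_mem_lamSet hG hinvG hact_mul hact_comp p hq,
    fun p _ q _ r _ => lamMul_assoc hG hinvG hact_mul hact_comp p q r⟩

theorem lamSemidirect_closed_and_assoc {A G : Type*} [Semigroup A] [Semigroup G]
    (hA : IsInverseSemigroup A) (hG : IsInverseSemigroup G)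
    (invG : G → G)
    (hinvG : ∀ g : G, g * invG g * g = g ∧ invG g * g * invG g = invG g)
    (act : G → A → A)
    (hact_mul : ∀ (g : G) (a b : A), act g (a * b) = act g a * act g b)
    (hact_comp : ∀ (g h : G) (a : A), act (g * h) a = act g (act h a)) :
    (∀ p ∈ lamSet act invG, ∀ q ∈ lamSet act invG,
        lamMul act invG p q ∈ lamSet act invG) ∧
    (∀ p ∈ lamSet act invG, ∀ q ∈ lamSet act invG, ∀ r ∈ lamSet act invG,
        lamMul act invG (lamMul act invG p q) r
          = lamMul act invG p (lamMul act invG q r)) :=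
  lamSemidirect_closed_and_assoc_general hG invG hinvG act hact_mul hact_comp
end

section
/- Let $I$ be an inverse semigroup generated by $\Sigma$ with idempotent problem $L$. The kernel of the canonical morphism from $I$ to the syntactic semigroup of $L$ is the greatest idempotent-pure congruence on $I$: every idempotent-pure congruence on $I$ is contained in it. -/
/-- Syntactic equivalence of two words of `Σ⁺` with respect to a language `L ⊆ Σ⁺`:
`u ≡_L v` iff for all (possibly empty) contexts `x, y ∈ Σ*`, `xuy ∈ L ↔ xvy ∈ L`. -/
def SynEq {α : Type*} (L : Set (FreeSemigroup α)) (u v : FreeSemigroup α) : Prop :=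
  (u ∈ L ↔ v ∈ L) ∧ (∀ x, x * u ∈ L ↔ x * v ∈ L) ∧
  (∀ y, u * y ∈ L ↔ v * y ∈ L) ∧ (∀ x y, x * u * y ∈ L ↔ x * v * y ∈ L)

/-- The syntactic congruence as a setoid on the free semigroup. -/
def synSetoid {α : Type*} (L : Set (FreeSemigroup α)) : Setoid (FreeSemigroup α) :=
  ⟨SynEq L,
   fun _ => ⟨Iff.rfl, fun _ => Iff.rfl, fun _ => Iff.rfl, fun _ _ => Iff.rfl⟩,
   fun h => ⟨h.1.symm, fun x => (h.2.1 x).symm, fun y => (h.2.2.1 y).symm,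
     fun x y => (h.2.2.2 x y).symm⟩,
   fun h1 h2 => ⟨h1.1.trans h2.1, fun x => (h1.2.1 x).trans (h2.2.1 x),
     fun y => (h1.2.2.1 y).trans (h2.2.2.1 y),
     fun x y => (h1.2.2.2 x y).trans (h2.2.2.2 x y)⟩⟩

/-- The idempotent problem of an inverse semigroup `I` with respect to the
canonical surjection `π : Σ⁺ → I`: the words representing idempotents. -/
def idemLang {α I : Type*} [Semigroup I] (π : FreeSemigroup α →ₙ* I) :
    Set (FreeSemigroup α) :=
  {w | IsIdempotentElem (π w)}

theorem synEq_preimage_of_compatible {α M : Type*} [Semigroup M]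
    (π : FreeSemigroup α →ₙ* M) (P : M → Prop) (σ : M → M → Prop)
    (hcompat : ∀ x a b, σ a b → σ (x * a) (x * b) ∧ σ (a * x) (b * x))
    (hsat : ∀ a b, σ a b → (P a ↔ P b)) {u v : FreeSemigroup α} (h : σ (π u) (π v)) :
    SynEq {w | P (π w)} u v := by
  refine ⟨hsat _ _ h, fun x => ?_, fun y => ?_, fun x y => ?_⟩
  · simpa only [Set.mem_ofPred_eq, map_mul] using hsat _ _ (hcompat (π x) _ _ h).1
  · simpa only [Set.mem_ofPred_eq, map_mul] using hsat _ _ (hcompat (π y) _ _ h).2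
  · simpa only [Set.mem_ofPred_eq, map_mul] using
      hsat _ _ (hcompat (π y) _ _ (hcompat (π x) _ _ h).1).2

theorem isIdempotentElem_iff_of_idempotentPure {M : Type*} [Mul M] (σ : M → M → Prop)
    (hsymm : ∀ a b, σ a b → σ b a)
    (hpure : ∀ e a, σ e a → IsIdempotentElem e → IsIdempotentElem a) {a b : M} (h : σ a b) :
    IsIdempotentElem a ↔ IsIdempotentElem b :=
  ⟨hpure a b h, hpure b a (hsymm a b h)⟩

theorem syntactic_kernel_greatest_idempotentPure_general {α I : Type*} [Semigroup I]
    (π : FreeSemigroup α →ₙ* I)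
    (σ : I → I → Prop)
    (hsymm : ∀ a b, σ a b → σ b a)
    (hcompat : ∀ x a b, σ a b → σ (x * a) (x * b) ∧ σ (a * x) (b * x))
    (hpure : ∀ e a, σ e a → IsIdempotentElem e → IsIdempotentElem a) :
    ∀ a b : I, σ a b → ∀ u v : FreeSemigroup α, π u = a → π v = b →
      SynEq (idemLang π) u v := by
  rintro a b hab u v rfl rfl
  exact synEq_preimage_of_compatible π IsIdempotentElem σ hcompat
    (fun _ _ => isIdempotentElem_iff_of_idempotentPure σ hsymm hpure) hab

theorem syntactic_kernel_greatest_idempotentPure {α I : Type*} [Semigroup I]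
    (hI : IsInverseSemigroup I)
    (π : FreeSemigroup α →ₙ* I) (hπ : Function.Surjective π)
    (σ : I → I → Prop)
    (hrefl : ∀ a, σ a a) (hsymm : ∀ a b, σ a b → σ b a)
    (htrans : ∀ a b c, σ a b → σ b c → σ a c)
    (hcompat : ∀ x a b, σ a b → σ (x * a) (x * b) ∧ σ (a * x) (b * x))
    (hpure : ∀ e a, σ e a → IsIdempotentElem e → IsIdempotentElem a) :
    ∀ a b : I, σ a b → ∀ u v : FreeSemigroup α, π u = a → π v = b →
      SynEq (idemLang π) u v :=
  syntactic_kernel_greatest_idempotentPure_general π σ hsymm hcompat hpure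
end

section
/- The syntactic semigroup of the idempotent problem of an inverse semigroup is, up to isomorphism, independent of the choice of semigroup generating set. -/
/-!
Both syntactic semigroups coincide with the syntactic semigroup of the set `E` of idempotents
inside `I` itself. Since `π : Σ⁺ → I` is a surjective morphism, the contexts in `Σ⁺` map onto
the contexts in `I`, so two words are syntactically equivalent for `π⁻¹(E)` exactly when their
images are syntactically equivalent for `E`.
-/

open Function

section Syntactic

variable {S : Type*} [Semigroup S] {α : Type*}

def syntacticCon (L : Set S) : Con S where
  r a b := (a ∈ L ↔ b ∈ L) ∧ (∀ x, x * a ∈ L ↔ x * b ∈ L) ∧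
    (∀ y, a * y ∈ L ↔ b * y ∈ L) ∧ (∀ x y, x * a * y ∈ L ↔ x * b * y ∈ L)
  iseqv :=
    { refl _ := ⟨Iff.rfl, fun _ => Iff.rfl, fun _ => Iff.rfl, fun _ _ => Iff.rfl⟩
      symm h := ⟨h.1.symm, fun x => (h.2.1 x).symm, fun y => (h.2.2.1 y).symm,
        fun x y => (h.2.2.2 x y).symm⟩
      trans h₁ h₂ := ⟨h₁.1.trans h₂.1, fun x => (h₁.2.1 x).trans (h₂.2.1 x),
        fun y => (h₁.2.2.1 y).trans (h₂.2.2.1 y),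
        fun x y => (h₁.2.2.2 x y).trans (h₂.2.2.2 x y)⟩ }
  mul' {a a' b b'} ha hb := by
    refine ⟨(ha.2.2.1 b).trans (hb.2.1 a'), fun x => ?_, fun y => ?_, fun x y => ?_⟩
    · have h₁ := ha.2.2.2 x b
      have h₂ := hb.2.1 (x * a')
      simp only [mul_assoc] at h₁ h₂ ⊢
      exact h₁.trans h₂
    · have h₁ := ha.2.2.1 (b * y)
      have h₂ := hb.2.2.2 a' y
      simp only [mul_assoc] at h₁ h₂ ⊢
      exact h₁.trans h₂
    · have h₁ := ha.2.2.2 x (b * y)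
      have h₂ := hb.2.2.2 (x * a') y
      simp only [mul_assoc] at h₁ h₂ ⊢
      exact h₁.trans h₂

theorem syntacticCon_iff {L : Set S} {a b : S} :
    syntacticCon L a b ↔ (a ∈ L ↔ b ∈ L) ∧ (∀ x, x * a ∈ L ↔ x * b ∈ L) ∧
      (∀ y, a * y ∈ L ↔ b * y ∈ L) ∧ (∀ x y, x * a * y ∈ L ↔ x * b * y ∈ L) :=
  Iff.rfl

theorem syntacticCon_preimage_iff {M : Type*} [Semigroup M] {f : M →ₙ* S}
    (hf : Surjective f) {L : Set S} {u v : M} :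
    syntacticCon (f ⁻¹' L) u v ↔ syntacticCon L (f u) (f v) := by
  simp only [syntacticCon_iff, Set.mem_preimage, map_mul, hf.forall]

theorem synSetoid_preimage_eq_ker {π : FreeSemigroup α →ₙ* S} (hπ : Surjective π)
    (L : Set S) :
    synSetoid (π ⁻¹' L) = Setoid.ker fun u => (π u : (syntacticCon L).Quotient) := by
  ext u v
  exact (syntacticCon_preimage_iff hπ).trans (Con.eq _).symm

noncomputable def synQuotientEquiv {π : FreeSemigroup α →ₙ* S}
    (hπ : Surjective π) (L : Set S) :
    Quotient (synSetoid (π ⁻¹' L)) ≃ (syntacticCon L).Quotient :=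
  (Quotient.congrRight fun u v => by rw [synSetoid_preimage_eq_ker hπ]).trans
    (Setoid.quotientKerEquivOfSurjective (fun u => (π u : (syntacticCon L).Quotient))
      (Quotient.mk''_surjective.comp hπ))

@[simp]
theorem synQuotientEquiv_mk {π : FreeSemigroup α →ₙ* S} (hπ : Surjective π)
    (L : Set S) (u : FreeSemigroup α) :
    synQuotientEquiv hπ L (Quotient.mk _ u) = (π u : (syntacticCon L).Quotient) :=
  rfl

end Syntactic

theorem idemLang_eq_preimage {α I : Type*} [Semigroup I] (π : FreeSemigroup α →ₙ* I) :
    idemLang π = π ⁻¹' {e | IsIdempotentElem e} :=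
  rfl

theorem syntactic_semigroup_generating_set_invariant_general {α β I : Type*} [Semigroup I]
    (π₁ : FreeSemigroup α →ₙ* I) (h₁ : Function.Surjective π₁)
    (π₂ : FreeSemigroup β →ₙ* I) (h₂ : Function.Surjective π₂) :
    ∃ φ : Quotient (synSetoid (idemLang π₁)) → Quotient (synSetoid (idemLang π₂)),
      Function.Bijective φ ∧
      ∀ (u v : FreeSemigroup α) (u' v' : FreeSemigroup β),
        φ (Quotient.mk (synSetoid (idemLang π₁)) u)
          = Quotient.mk (synSetoid (idemLang π₂)) u' →
        φ (Quotient.mk (synSetoid (idemLang π₁)) v)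
          = Quotient.mk (synSetoid (idemLang π₂)) v' →
        φ (Quotient.mk (synSetoid (idemLang π₁)) (u * v))
          = Quotient.mk (synSetoid (idemLang π₂)) (u' * v') := by
  rw [idemLang_eq_preimage, idemLang_eq_preimage]
  let e₁ := synQuotientEquiv h₁ {e : I | IsIdempotentElem e}
  let e₂ := synQuotientEquiv h₂ {e : I | IsIdempotentElem e}
  refine ⟨e₂.symm ∘ e₁, e₂.symm.bijective.comp e₁.bijective, fun u v u' v' hu hv => ?_⟩
  simp only [comp_apply, Equiv.symm_apply_eq, e₁, e₂, synQuotientEquiv_mk] at hu hv ⊢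
  rw [map_mul, map_mul, Con.coe_mul, Con.coe_mul, hu, hv]

theorem syntactic_semigroup_generating_set_invariant {α β I : Type*} [Semigroup I]
    (hI : IsInverseSemigroup I)
    (π₁ : FreeSemigroup α →ₙ* I) (h₁ : Function.Surjective π₁)
    (π₂ : FreeSemigroup β →ₙ* I) (h₂ : Function.Surjective π₂) :
    ∃ φ : Quotient (synSetoid (idemLang π₁)) → Quotient (synSetoid (idemLang π₂)),
      Function.Bijective φ ∧
      ∀ (u v : FreeSemigroup α) (u' v' : FreeSemigroup β),
        φ (Quotient.mk (synSetoid (idemLang π₁)) u)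
          = Quotient.mk (synSetoid (idemLang π₂)) u' →
        φ (Quotient.mk (synSetoid (idemLang π₁)) v)
          = Quotient.mk (synSetoid (idemLang π₂)) v' →
        φ (Quotient.mk (synSetoid (idemLang π₁)) (u * v))
          = Quotient.mk (synSetoid (idemLang π₂)) (u' * v') :=
  syntactic_semigroup_generating_set_invariant_general π₁ h₁ π₂ h₂
end

section
/- Up to isomorphism, there are only finitely many inverse semigroups having a given fixed regular language as their idempotent problem. -/
/-!
Send `s ∈ I` to the syntactic class of a word for `s`, together with the set of transitions
(state, letter) of the syntactic automaton of `L` used while reading a word for the idempotent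
`s⁻¹s`; there are finitely many such data. The map is injective. In an inverse semigroup `s = t`
as soon as `s⁻¹s = t⁻¹t` and `st⁻¹` is idempotent, and `st⁻¹` is idempotent because `tt⁻¹` is
and the words for `s` and `t` are syntactically equivalent. Two idempotent words `u`, `v` with the
same transitions represent the same idempotent: reading `v` letter by letter, every prefix `p`
satisfies `u ≤ pp⁻¹` (that is, `u · pp⁻¹ = u`), because the next transition of `v` also occurs
in `u` after a syntactically equivalent prefix `p'`, and for an idempotent `e ≤ pp⁻¹, p'p'⁻¹`
this equivalence forces `ep = ep'`.
-/

/-- The inverse map of an inverse semigroup, as a mixin providing the notation `x⁻¹`. -/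
class InverseSemigroupInv (S : Type*) [Semigroup S] extends Inv S where
  mul_inv_mul (x : S) : x * x⁻¹ * x = x
  inv_mul_inv (x : S) : x⁻¹ * x * x⁻¹ = x⁻¹
  eq_inv_of_mul_mul {x y : S} : x * y * x = x → y * x * y = y → y = x⁻¹

@[reducible] noncomputable def IsInverseSemigroup.inverseSemigroupInv {S : Type*} [Semigroup S]
    (h : IsInverseSemigroup S) : InverseSemigroupInv S where
  inv x := (h x).choose
  mul_inv_mul x := (h x).choose_spec.1.1
  inv_mul_inv x := (h x).choose_spec.1.2
  eq_inv_of_mul_mul h1 h2 := (h _).choose_spec.2 _ ⟨h1, h2⟩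

namespace InverseSemigroupInv

variable {S : Type*} [Semigroup S] [InverseSemigroupInv S]

theorem inv_inv (x : S) : x⁻¹⁻¹ = x :=
  (eq_inv_of_mul_mul (inv_mul_inv x) (mul_inv_mul x)).symm

theorem inv_eq_self_of_isIdempotentElem {e : S} (he : IsIdempotentElem e) : e⁻¹ = e := by
  have h : e * e * e = e := by rw [he.eq, he.eq]
  exact (eq_inv_of_mul_mul h h).symm

theorem isIdempotentElem_mul_inv (x : S) : IsIdempotentElem (x * x⁻¹) := by
  have := mul_inv_mul x
  unfold IsIdempotentElem; grind

theorem isIdempotentElem_inv_mul (x : S) : IsIdempotentElem (x⁻¹ * x) := by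
  have := inv_mul_inv x
  unfold IsIdempotentElem; grind

theorem isIdempotentElem_mul {e f : S} (he : IsIdempotentElem e) (hf : IsIdempotentElem f) :
    IsIdempotentElem (e * f) := by
  set x := (e * f)⁻¹
  -- `f * x * e` is an inverse of `e * f`, and this identity makes `x` idempotent.
  have hx : f * x * e = x := by
    have h1 := mul_inv_mul (e * f)
    have h2 := inv_mul_inv (e * f)
    unfold IsIdempotentElem at he hf
    refine (eq_inv_of_mul_mul (x := e * f) (y := f * x * e) ?_ ?_) <;> grind
  have hxx : IsIdempotentElem x := by
    have h2 := inv_mul_inv (e * f)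
    unfold IsIdempotentElem at he hf ⊢
    grind
  rw [← inv_inv (e * f), inv_eq_self_of_isIdempotentElem hxx]
  exact hxx

theorem mul_comm_of_isIdempotentElem {e f : S} (he : IsIdempotentElem e)
    (hf : IsIdempotentElem f) : e * f = f * e := by
  have hef := isIdempotentElem_mul he hf
  have hfe := isIdempotentElem_mul hf he
  unfold IsIdempotentElem at *
  -- `f * e` is an inverse of the idempotent `e * f`, whose only inverse is itself.
  have := eq_inv_of_mul_mul (x := e * f) (y := f * e) (by grind) (by grind)
  rw [inv_eq_self_of_isIdempotentElem hef] at this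
  exact this.symm

theorem mul_inv_rev (x y : S) : (x * y)⁻¹ = y⁻¹ * x⁻¹ := by
  have hc :=
    mul_comm_of_isIdempotentElem (isIdempotentElem_mul_inv y) (isIdempotentElem_inv_mul x)
  have h1 := mul_inv_mul x
  have h2 := mul_inv_mul y
  have h3 := inv_mul_inv x
  have h4 := inv_mul_inv y
  refine (eq_inv_of_mul_mul ?_ ?_).symm <;> grind

theorem isIdempotentElem_inv_mul_mul {e : S} (he : IsIdempotentElem e) (x : S) :
    IsIdempotentElem (x⁻¹ * e * x) := by
  have hc := mul_comm_of_isIdempotentElem he (isIdempotentElem_mul_inv x)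
  have := inv_mul_inv x
  unfold IsIdempotentElem at *
  grind

theorem mul_mul_inv_mul_mul_inv (x y : S) :
    x * y * (x * y)⁻¹ * (x * x⁻¹) = x * y * (x * y)⁻¹ := by
  have hc :=
    mul_comm_of_isIdempotentElem (isIdempotentElem_mul_inv y) (isIdempotentElem_inv_mul x)
  calc x * y * (x * y)⁻¹ * (x * x⁻¹) = x * (y * y⁻¹ * (x⁻¹ * x)) * x⁻¹ := by
        simp only [mul_inv_rev, mul_assoc]
    _ = x * x⁻¹ * x * (y * y⁻¹) * x⁻¹ := by rw [hc]; simp only [mul_assoc]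
    _ = x * y * (x * y)⁻¹ := by rw [mul_inv_mul]; simp only [mul_inv_rev, mul_assoc]

theorem eq_of_mul_inv_eq_of_isIdempotentElem_inv_mul {x y : S} (hxy : x * x⁻¹ = y * y⁻¹)
    (hf : IsIdempotentElem (x⁻¹ * y)) : x = y := by
  set f := x⁻¹ * y with hfdef
  have hy : x * f = y := by rw [hfdef, ← mul_assoc, hxy, mul_inv_mul]
  have hc := mul_comm_of_isIdempotentElem hf (isIdempotentElem_inv_mul x)
  calc x = y * y⁻¹ * x := by rw [← hxy, mul_inv_mul]
    _ = x * (f * f) * (x⁻¹ * x) := by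
        rw [← hy, mul_inv_rev, inv_eq_self_of_isIdempotentElem hf]; simp only [mul_assoc]
    _ = x * x⁻¹ * x * f := by rw [hf.eq, mul_assoc, hc]; simp only [mul_assoc]
    _ = y := by rw [mul_inv_mul, hy]

theorem eq_of_inv_mul_eq_of_isIdempotentElem_mul_inv {x y : S} (hxy : x⁻¹ * x = y⁻¹ * y)
    (hf : IsIdempotentElem (x * y⁻¹)) : x = y := by
  have h := eq_of_mul_inv_eq_of_isIdempotentElem_inv_mul (x := x⁻¹) (y := y⁻¹)
    (by rwa [inv_inv, inv_inv]) (by rwa [inv_inv])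
  rw [← inv_inv x, h, inv_inv]

theorem mul_eq_mul_of_isIdempotentElem_inv_mul_mul {e s t : S} (he : IsIdempotentElem e)
    (hs : e * (s * s⁻¹) = e) (ht : e * (t * t⁻¹) = e) (h : IsIdempotentElem (t⁻¹ * e * s)) :
    e * t = e * s := by
  have hrange {x : S} (hx : e * (x * x⁻¹) = e) : e * x * (e * x)⁻¹ = e := by
    rw [mul_inv_rev, inv_eq_self_of_isIdempotentElem he, mul_assoc, ← mul_assoc x, ← mul_assoc,
      hx, he.eq]
  refine eq_of_mul_inv_eq_of_isIdempotentElem_inv_mul (by rw [hrange hs, hrange ht]) ?_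
  rwa [mul_inv_rev, inv_eq_self_of_isIdempotentElem he, mul_assoc, ← mul_assoc e, he.eq,
    ← mul_assoc]

theorem mul_conj_eq_conj_mul {e k : S} (he : IsIdempotentElem e) (hk : IsIdempotentElem k)
    (x : S) : e * (x * k * x⁻¹) = e * x * k * (e * x)⁻¹ := by
  have hf : IsIdempotentElem (x * k * x⁻¹) := by
    simpa only [inv_inv] using isIdempotentElem_inv_mul_mul hk x⁻¹
  have hc := mul_comm_of_isIdempotentElem he hf
  rw [mul_inv_rev, inv_eq_self_of_isIdempotentElem he]
  unfold IsIdempotentElem at he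
  grind

end InverseSemigroupInv

namespace FreeSemigroup

variable {α : Type*}

theorem induction_on_mul_of {C : FreeSemigroup α → Prop} (w : FreeSemigroup α)
    (h_of : ∀ a, C (of a)) (h_mul_of : ∀ w a, C w → C (w * of a)) : C w := by
  obtain ⟨a, l⟩ := w
  induction l using List.reverseRecOn with
  | nil => exact h_of a
  | append_singleton l b ih => exact h_mul_of ⟨a, l⟩ b ih

def IsPrefix (p u : FreeSemigroup α) : Prop :=
  u = p ∨ ∃ r, u = p * r

theorem IsPrefix.refl (p : FreeSemigroup α) : IsPrefix p p := Or.inl rfl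

theorem isPrefix_mul (p w : FreeSemigroup α) : IsPrefix p (p * w) := Or.inr ⟨w, rfl⟩

theorem IsPrefix.trans {p q u : FreeSemigroup α} (hpq : IsPrefix p q) (hqu : IsPrefix q u) :
    IsPrefix p u := by
  rcases hqu with rfl | ⟨r, rfl⟩
  · exact hpq
  · rcases hpq with rfl | ⟨s, rfl⟩
    · exact isPrefix_mul _ r
    · exact Or.inr ⟨s * r, mul_assoc p s r⟩

/-- For `σ` the state map of an automaton, the transitions (state, letter) used while reading `u`,
with `none` the state before the first letter. -/
def transitions {β : Type*} (σ : FreeSemigroup α → β) (u : FreeSemigroup α) :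
    Set (Option β × α) :=
  {(none, a) | (a : α) (_ : IsPrefix (of a) u)} ∪
    {(some (σ p), a) | (p : FreeSemigroup α) (a : α) (_ : IsPrefix (p * of a) u)}

variable {β : Type*} {σ : FreeSemigroup α → β} {u v : FreeSemigroup α} {a : α}

theorem mem_transitions_none : (none, a) ∈ transitions σ u ↔ IsPrefix (of a) u := by
  simp [transitions]

theorem mem_transitions_some {q : β} :
    (some q, a) ∈ transitions σ u ↔ ∃ p, σ p = q ∧ IsPrefix (p * of a) u := by
  simp [transitions, and_comm]

theorem transitions_mono (h : IsPrefix v u) : transitions σ v ⊆ transitions σ u := by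
  rintro ⟨_ | q, b⟩ hb
  · exact mem_transitions_none.2 ((mem_transitions_none.1 hb).trans h)
  · obtain ⟨p, hp, hpv⟩ := mem_transitions_some.1 hb
    exact mem_transitions_some.2 ⟨p, hp, hpv.trans h⟩

end FreeSemigroup

section IdempotentProblem

open FreeSemigroup InverseSemigroupInv

variable {α β S : Type*} [Semigroup S] {π : FreeSemigroup α →ₙ* S} {L : Set (FreeSemigroup α)}

theorem SynEq.isIdempotentElem_mul_left_iff (hπ : Function.Surjective π) (hL : idemLang π = L)
    {p q : FreeSemigroup α} (h : SynEq L p q) (c : S) :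
    IsIdempotentElem (c * π p) ↔ IsIdempotentElem (c * π q) := by
  obtain ⟨x, rfl⟩ := hπ c
  rw [← map_mul, ← map_mul]
  subst hL
  exact h.2.1 x

theorem SynEq.isIdempotentElem_mul_right_iff (hπ : Function.Surjective π) (hL : idemLang π = L)
    {p q : FreeSemigroup α} (h : SynEq L p q) (c : S) :
    IsIdempotentElem (π p * c) ↔ IsIdempotentElem (π q * c) := by
  obtain ⟨y, rfl⟩ := hπ c
  rw [← map_mul, ← map_mul]
  subst hL
  exact h.2.2.1 y

variable [InverseSemigroupInv S]

theorem mul_mul_inv_eq_of_isPrefix {p u : FreeSemigroup α} (hu : IsIdempotentElem (π u))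
    (h : IsPrefix p u) : π u * (π p * (π p)⁻¹) = π u := by
  rcases h with rfl | ⟨r, rfl⟩
  · rw [inv_eq_self_of_isIdempotentElem hu, hu.eq, hu.eq]
  · have h := mul_mul_inv_mul_mul_inv (π p) (π r)
    rwa [← map_mul, inv_eq_self_of_isIdempotentElem hu, hu.eq] at h

theorem mul_mul_inv_eq_of_transitions_subset {σ : FreeSemigroup α → β}
    (hσ : ∀ p q, σ p = σ q → ∀ c : S, IsIdempotentElem (c * π q) → IsIdempotentElem (c * π p))
    {u v : FreeSemigroup α} (hu : IsIdempotentElem (π u))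
    (huv : transitions σ v ⊆ transitions σ u) : π u * (π v * (π v)⁻¹) = π u := by
  induction v using induction_on_mul_of with
  | h_of a =>
    exact mul_mul_inv_eq_of_isPrefix hu
      (mem_transitions_none.1 (huv (mem_transitions_none.2 (IsPrefix.refl _))))
  | h_mul_of w a ih =>
    have hs := ih ((transitions_mono (isPrefix_mul w (of a))).trans huv)
    obtain ⟨p, hp, hpa⟩ :=
      mem_transitions_some.1 (huv (mem_transitions_some.2 ⟨w, rfl, IsPrefix.refl _⟩))
    set e := π u
    set k := π (of a) * (π (of a))⁻¹
    have hk : IsIdempotentElem k := isIdempotentElem_mul_inv _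
    have hconj (x : FreeSemigroup α) : π (x * of a) * (π (x * of a))⁻¹ = π x * k * (π x)⁻¹ := by
      simp only [k, map_mul, InverseSemigroupInv.mul_inv_rev, mul_assoc]
    have ht := mul_mul_inv_eq_of_isPrefix hu ((isPrefix_mul p (of a)).trans hpa)
    have htk := mul_mul_inv_eq_of_isPrefix hu hpa
    have hidem : IsIdempotentElem ((π p)⁻¹ * e * π w) :=
      hσ w p hp.symm _ (isIdempotentElem_inv_mul_mul hu (π p))
    have hpw := mul_eq_mul_of_isIdempotentElem_inv_mul_mul hu hs ht hidem
    calc e * (π (w * of a) * (π (w * of a))⁻¹) = e * π w * k * (e * π w)⁻¹ := by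
          rw [hconj, mul_conj_eq_conj_mul hu hk]
      _ = e := by rw [← hpw, ← mul_conj_eq_conj_mul hu hk, ← hconj, htk]

theorem eq_of_transitions_eq {σ : FreeSemigroup α → β}
    (hσ : ∀ p q, σ p = σ q → ∀ c : S, IsIdempotentElem (c * π q) → IsIdempotentElem (c * π p))
    {u v : FreeSemigroup α} (hu : IsIdempotentElem (π u)) (hv : IsIdempotentElem (π v))
    (h : transitions σ u = transitions σ v) : π u = π v := by
  have huv := mul_mul_inv_eq_of_transitions_subset hσ hu h.ge
  have hvu := mul_mul_inv_eq_of_transitions_subset hσ hv h.le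
  rw [inv_eq_self_of_isIdempotentElem hv, hv.eq] at huv
  rw [inv_eq_self_of_isIdempotentElem hu, hu.eq] at hvu
  rw [← huv, mul_comm_of_isIdempotentElem hu hv, hvu]

theorem exists_injective_to_syntactic_transitions (hπ : Function.Surjective π)
    (hL : idemLang π = L) :
    ∃ Φ : S → Quotient (synSetoid L) × Set (Option (Quotient (synSetoid L)) × α),
      Function.Injective Φ := by
  set w := Function.surjInv hπ
  have hw : ∀ s, π (w s) = s := Function.surjInv_eq hπ
  set σ := Quotient.mk (synSetoid L)
  have hσ (p q) (hpq : σ p = σ q) (c : S) (hc : IsIdempotentElem (c * π q)) :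
      IsIdempotentElem (c * π p) :=
    ((Quotient.exact hpq : SynEq L p q).isIdempotentElem_mul_left_iff hπ hL c).2 hc
  refine ⟨fun s => (σ (w s), transitions σ (w (s⁻¹ * s))), fun s t hst => ?_⟩
  obtain ⟨hclass, htrans⟩ := Prod.ext_iff.1 hst
  have hdom : s⁻¹ * s = t⁻¹ * t := by
    simpa only [hw] using eq_of_transitions_eq hσ
      (by simpa only [hw] using isIdempotentElem_inv_mul s)
      (by simpa only [hw] using isIdempotentElem_inv_mul t) htrans
  have hidem : IsIdempotentElem (s * t⁻¹) := by
    have hst : SynEq L (w s) (w t) := Quotient.exact hclass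
    simpa only [hw] using (hst.isIdempotentElem_mul_right_iff hπ hL t⁻¹).2
      (by simpa only [hw] using isIdempotentElem_mul_inv t)
  exact eq_of_inv_mul_eq_of_isIdempotentElem_mul_inv hdom hidem

end IdempotentProblem

theorem finite_setOf_fst_le (N : ℕ) :
    {p : (n : ℕ) × (Fin n → Fin n → Fin n) | p.1 ≤ N}.Finite :=
  (Set.finite_Iic N).preimage' fun n _ =>
    (Set.finite_range (Sigma.mk n)).subset (by rintro ⟨m, f⟩ rfl; exact ⟨f, rfl⟩)

theorem finitely_many_inverse_semigroups_with_given_idempotent_problem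
    {α : Type} [Finite α] (L : Set (FreeSemigroup α))
    (hreg : Finite (Quotient (synSetoid L))) :
    ∃ S : Set ((n : ℕ) × (Fin n → Fin n → Fin n)), S.Finite ∧
      ∀ (I : Type) (_ : Semigroup I), IsInverseSemigroup I →
        ∀ π : FreeSemigroup α →ₙ* I, Function.Surjective π →
          idemLang π = L →
          ∃ p ∈ S, ∃ φ : I ≃ Fin p.1,
            ∀ a b : I, φ (a * b) = p.2 (φ a) (φ b) := by
  refine ⟨_, finite_setOf_fst_le
    (Nat.card (Quotient (synSetoid L) × Set (Option (Quotient (synSetoid L)) × α))),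
    fun I _ hI π hπ hL => ?_⟩
  let := hI.inverseSemigroupInv
  obtain ⟨Φ, hΦ⟩ := exists_injective_to_syntactic_transitions hπ hL
  have : Finite I := Finite.of_injective Φ hΦ
  let φ := Finite.equivFin I
  exact ⟨⟨Nat.card I, fun i j => φ (φ.symm i * φ.symm j)⟩,
    Nat.card_le_card_of_injective Φ hΦ, φ, by simp⟩
end
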